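/- Let S = K[x_1,...,x_n] with a positive grading, let I ⊆ S be a homogeneous ideal such that x_n is a nonzerodivisor on S/I, and suppose the monomial order is x_n-addicted. Then x_n does not divide any minimal monomial generator of the initial ideal in(I). -/

import Mathlib

open MvPolynomial Finset

/-- A monomial order on the exponent vectors of `K[x_1,…,x_n]`: a linear order that is
compatible with addition and has `0` (i.e. the monomial `1`) as least element. -/
def IsMonomialOrder (n : ℕ) (le : (Fin n →₀ ℕ) → (Fin n →₀ ℕ) → Prop) : Prop :=
  IsLinearOrder (Fin n →₀ ℕ) le ∧ (∀ a, le 0 a) ∧ ∀ a b c, le a b → le (a + c) (b + c)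

/-- `u` is the exponent vector of the initial (largest) monomial of `f`. -/
def IsLeadExp {n : ℕ} {K : Type*} [CommSemiring K] (le : (Fin n →₀ ℕ) → (Fin n →₀ ℕ) → Prop)
    (f : MvPolynomial (Fin n) K) (u : Fin n →₀ ℕ) : Prop :=
  u ∈ f.support ∧ ∀ v ∈ f.support, le v u

/-- The initial ideal of `I` with respect to a monomial order. -/
noncomputable def initialIdeal {n : ℕ} {K : Type*} [CommSemiring K]
    (le : (Fin n →₀ ℕ) → (Fin n →₀ ℕ) → Prop)
    (I : Ideal (MvPolynomial (Fin n) K)) : Ideal (MvPolynomial (Fin n) K) :=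
  Ideal.span {m | ∃ f u, f ∈ I ∧ IsLeadExp le f u ∧ m = monomial u (1 : K)}

/-- An (abstract) simplicial complex on `[n]`: a downward closed family of finsets. -/
def IsComplex {n : ℕ} (Δ : Finset (Fin n) → Prop) : Prop :=
  ∀ F G : Finset (Fin n), Δ F → G ⊆ F → Δ G

/-- The Stanley-Reisner ideal of `Δ`, generated by the squarefree monomials of non-faces. -/
noncomputable def srIdeal {n : ℕ} (K : Type*) [CommSemiring K] (Δ : Finset (Fin n) → Prop) :
    Ideal (MvPolynomial (Fin n) K) :=
  Ideal.span {m | ∃ F : Finset (Fin n), ¬ Δ F ∧ m = ∏ i ∈ F, X i}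

/-- The exponent vector of the squarefree monomial `x_F = ∏_{i ∈ F} x_i`. -/
noncomputable def indic {n : ℕ} (F : Finset (Fin n)) : Fin n →₀ ℕ := ∑ i ∈ F, Finsupp.single i 1

/-- `F` is a minimal non-face of `Δ`. -/
def MinNF {n : ℕ} (Δ : Finset (Fin n) → Prop) (F : Finset (Fin n)) : Prop :=
  ¬ Δ F ∧ ∀ G, G ⊂ F → Δ G

/-- If the monomial order is x_n-addicted, I is homogeneous with respect to a positive grading,
and x_n is a nonzerodivisor on S/I, then x_n divides no minimal monomial generator of in(I). -/
theorem stmt4 {n : ℕ} {K : Type*} [Field K]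
    (le : (Fin (n + 1) →₀ ℕ) → (Fin (n + 1) →₀ ℕ) → Prop)
    (hmo : IsMonomialOrder (n + 1) le)
    (haddict : ∀ f : MvPolynomial (Fin (n + 1)) K, f ≠ 0 → ∀ u, IsLeadExp le f u →
      u (Fin.last n) ≠ 0 → X (Fin.last n) ∣ f)
    (w : Fin (n + 1) → ℕ) (hw : ∀ i, 0 < w i)
    (I : Ideal (MvPolynomial (Fin (n + 1)) K))
    (hIhom : ∀ f ∈ I, ∀ d, weightedHomogeneousComponent w d f ∈ I)
    (hreg : ∀ g, X (Fin.last n) * g ∈ I → g ∈ I)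
    (u : Fin (n + 1) →₀ ℕ) (hu : monomial u (1 : K) ∈ initialIdeal le I)
    (humin : ∀ v, v ≤ u → v ≠ u → monomial v (1 : K) ∉ initialIdeal le I) :
    u (Fin.last n) = 0 := by
  obtain ⟨hlin, hzero, hadd⟩ := hmo
  haveI := hlin
  by_contra hne
  -- rewrite the initial ideal's generating set as an image
  have hset : {m | ∃ f v, f ∈ I ∧ IsLeadExp le f v ∧ m = monomial v (1 : K)}
      = (fun s => monomial s (1 : K)) '' {v | ∃ f ∈ I, IsLeadExp le f v} := by
    ext m
    constructor
    · rintro ⟨f, v, hf, hlead, rfl⟩; exact ⟨v, ⟨f, hf, hlead⟩, rfl⟩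
    · rintro ⟨v, ⟨f, hf, hlead⟩, rfl⟩; exact ⟨f, v, hf, hlead, rfl⟩
  have hu' := hu
  rw [initialIdeal, hset, mem_ideal_span_monomial_image] at hu'
  obtain ⟨v, ⟨f, hfI, hflead⟩, hvu⟩ := hu' u (by
    classical
    rw [support_monomial, if_neg (one_ne_zero : (1 : K) ≠ 0)]
    exact Finset.mem_singleton_self u)
  -- v must equal u by minimality
  have hvmem : monomial v (1 : K) ∈ initialIdeal le I :=
    Ideal.subset_span ⟨f, v, hfI, hflead, rfl⟩
  have hvu' : v = u := by
    by_contra h; exact humin v hvu h hvmem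
  rw [hvu'] at hflead
  -- so f has lead exponent u; since u (last) ≠ 0, X last ∣ f
  have hf0 : f ≠ 0 := by
    intro h; rw [h] at hflead; exact absurd hflead.1 (by simp)
  obtain ⟨g, hg⟩ := haddict f hf0 u hflead hne
  have hgI : g ∈ I := hreg g (hg ▸ hfI)
  -- support of f = shift of support of g
  have hsupp : f.support = g.support.map (addLeftEmbedding (Finsupp.single (Fin.last n) 1)) := by
    rw [hg, support_X_mul]
  -- u = single + w₀ for some w₀ ∈ g.support
  have humem := hflead.1
  rw [hsupp, Finset.mem_map] at humem
  obtain ⟨w₀, hw₀, hw₀u⟩ := humem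
  have hw₀u : Finsupp.single (Fin.last n) 1 + w₀ = u := hw₀u
  -- w₀ is a lead exponent of g
  have hcancel : ∀ a b c, le (a + c) (b + c) → le a b := by
    intro a b c h
    rcases hlin.toTotal.total a b with h' | h'
    · exact h'
    · have := hadd b a c h'
      have : a + c = b + c := hlin.toIsPartialOrder.toAntisymm.antisymm _ _ h this
      have : a = b := by
        have := congrArg (fun x => x - c) this
        simpa using this
      exact this ▸ hlin.toIsPartialOrder.toIsPreorder.toRefl.refl b
  have hglead : IsLeadExp le g w₀ := by
    refine ⟨hw₀, fun t ht => ?_⟩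
    have htf : Finsupp.single (Fin.last n) 1 + t ∈ f.support := by
      rw [hsupp, Finset.mem_map]; exact ⟨t, ht, rfl⟩
    have := hflead.2 _ htf
    rw [← hw₀u] at this
    have h1 : le (t + Finsupp.single (Fin.last n) 1) (w₀ + Finsupp.single (Fin.last n) 1) := by
      rwa [add_comm t, add_comm w₀]
    exact hcancel _ _ _ h1
  -- contradiction with minimality
  have hwle : w₀ ≤ u := by rw [← hw₀u]; exact le_add_self
  have hwne : w₀ ≠ u := by
    intro h
    rw [h] at hw₀u
    have := congrArg (fun x => x (Fin.last n)) hw₀u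
    simp at this
  exact humin w₀ hwle hwne (Ideal.subset_span ⟨g, w₀, hgI, hglead, rfl⟩)
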